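/- Assume Hypothesis (Contra) and that T is abelian. Then: (i) if T is normal in U for U ∈ {P, R}, then T = C_U(T); and (ii) if T is normal in both P and R, then Out_P(T) ≠ Out_R(T) as subgroups of Out_F(T). -/

import Mathlib

open Subgroup

section Core

variable {S : Type*} [Group S]

/-- Conjugation by `s` as a homomorphism between subgroups `P` and `Q` of `S`,
when `s` conjugates `P` into `Q`. -/
def conjMap (s : S) (P Q : Subgroup S) (h : ∀ x ∈ P, s * x * s⁻¹ ∈ Q) : P →* Q where
  toFun x := ⟨s * ↑x * s⁻¹, h x x.2⟩
  map_one' := by ext; simp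
  map_mul' x y := by ext; push_cast; group

/-- The range in `S` of a homomorphism between subgroups of `S`. -/
def rngS {P Q : Subgroup S} (φ : P →* Q) : Subgroup S := (Q.subtype.comp φ).range

lemma rngS_le {P Q : Subgroup S} (φ : P →* Q) : rngS φ ≤ Q := by
  rintro x ⟨y, rfl⟩
  exact (φ y).2

/-- A fusion system on a group `S`: a collection of injective homomorphisms between
the subgroups of `S`, containing all homomorphisms induced by conjugation in `S`,
closed under composition and taking inverses of isomorphisms, and such that every
morphism factors as an isomorphism in the system followed by an inclusion. -/
structure FusionSystem (S : Type*) [Group S] where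
  Hom : ∀ P Q : Subgroup S, Set (P →* Q)
  inj : ∀ {P Q : Subgroup S} (φ : P →* Q), φ ∈ Hom P Q → Function.Injective φ
  conj_mem : ∀ (P Q : Subgroup S) (s : S) (h : ∀ x ∈ P, s * x * s⁻¹ ∈ Q),
    conjMap s P Q h ∈ Hom P Q
  comp_mem : ∀ {P Q R : Subgroup S} (φ : P →* Q) (ψ : Q →* R),
    φ ∈ Hom P Q → ψ ∈ Hom Q R → ψ.comp φ ∈ Hom P R
  inv_mem : ∀ {P Q : Subgroup S} (e : P ≃* Q), e.toMonoidHom ∈ Hom P Q →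
    e.symm.toMonoidHom ∈ Hom Q P
  factor : ∀ {P Q : Subgroup S} (φ : P →* Q) (hφ : φ ∈ Hom P Q),
    ∃ e : P ≃* rngS φ, e.toMonoidHom ∈ Hom P (rngS φ) ∧
      (Subgroup.inclusion (rngS_le φ)).comp e.toMonoidHom = φ

namespace FusionSystem

variable (F : FusionSystem S)

/-- The set of `F`-isomorphisms from `P` to `Q`. -/
def IsoF (P Q : Subgroup S) : Set (P ≃* Q) := {e | e.toMonoidHom ∈ F.Hom P Q}

/-- Two subgroups are `F`-conjugate if they are isomorphic in `F`. -/
def FConj (P Q : Subgroup S) : Prop := ∃ e : P ≃* Q, e.toMonoidHom ∈ F.Hom P Q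

/-- A subgroup `P ≤ S` is `F`-centric if `C_S(Q) ≤ Q` for every `Q` that is
`F`-conjugate to `P`. -/
def Centric (P : Subgroup S) : Prop :=
  ∀ Q : Subgroup S, F.FConj P Q → Subgroup.centralizer (Q : Set S) ≤ Q

end FusionSystem

/-- Conjugation gives a homomorphism from the normalizer of `P` to the automorphisms
of `P`. -/
def conjAut (P : Subgroup S) : (Subgroup.normalizer (P : Set S)) →* MulAut P where
  toFun g :=
    { toFun := fun x => ⟨↑g * ↑x * (↑g)⁻¹, (mem_normalizer_iff.mp g.2 ↑x).mp x.2⟩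
      invFun := fun x => ⟨(↑g)⁻¹ * ↑x * ↑g, by
        have := (mem_normalizer_iff.mp ((Subgroup.normalizer (P : Set S)).inv_mem g.2) (↑x)).mp x.2
        simpa using this⟩
      left_inv := fun x => by ext; simp [mul_assoc]
      right_inv := fun x => by ext; simp [mul_assoc]
      map_mul' := fun x y => by ext; push_cast; group }
  map_one' := by ext; simp
  map_mul' g h := by ext x; simp only [MulAut.mul_apply, MulEquiv.coe_mk, Equiv.coe_fn_mk]; push_cast; group

namespace FusionSystem

variable (F : FusionSystem S)

/-- The group `Aut_F(P)` of `F`-automorphisms of `P`, as a subgroup of `MulAut P`. -/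
def AutF (P : Subgroup S) : Subgroup (MulAut P) where
  carrier := {e | e.toMonoidHom ∈ F.Hom P P}
  one_mem' := by
    have h : ∀ x ∈ P, (1 : S) * x * (1 : S)⁻¹ ∈ P := by intro x hx; simpa using hx
    have h2 := F.conj_mem P P 1 h
    have he : conjMap (1 : S) P P h = (1 : MulAut P).toMonoidHom := by
      ext x; simp [conjMap]
    rwa [he] at h2
  mul_mem' := by
    intro a b ha hb
    have he : (a * b).toMonoidHom = a.toMonoidHom.comp b.toMonoidHom := by
      ext x; rfl
    simp only [Set.mem_setOf_eq] at *
    rw [he]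
    exact F.comp_mem _ _ hb ha
  inv_mem' := by
    intro a ha
    exact F.inv_mem a ha

end FusionSystem

/-- The inner automorphisms of (the group) `P`, as a subgroup of `MulAut P`. -/
def innAut (P : Type*) [Group P] : Subgroup (MulAut P) := (MulAut.conj : P →* MulAut P).range

lemma innAut_normal (P : Type*) [Group P] : (innAut P).Normal := by
  constructor
  rintro _ ⟨x, rfl⟩ g
  refine ⟨g x, ?_⟩
  ext y
  simp [MulAut.conj]

namespace FusionSystem

variable (F : FusionSystem S)

/-- `Inn(P)` as a subgroup of `Aut_F(P)`. -/
def innFOf (P : Subgroup S) : Subgroup (F.AutF P) := (innAut P).subgroupOf (F.AutF P)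

instance innFOf_normal (P : Subgroup S) : (F.innFOf P).Normal :=
  Subgroup.Normal.subgroupOf (innAut_normal P) _

/-- `Out_F(P) = Aut_F(P)/Inn(P)`. -/
def OutF (P : Subgroup S) : Type _ := F.AutF P ⧸ F.innFOf P

noncomputable instance (P : Subgroup S) : Group (F.OutF P) :=
  inferInstanceAs (Group (F.AutF P ⧸ F.innFOf P))

/-- The quotient map `Aut_F(P) → Out_F(P)`. -/
def outMk (P : Subgroup S) : F.AutF P →* F.OutF P := QuotientGroup.mk' (F.innFOf P)

/-- Conjugation gives a homomorphism `N_S(P) → Aut_F(P)`. -/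
def toAutF (P : Subgroup S) : (Subgroup.normalizer (P : Set S)) →* F.AutF P :=
  (conjAut P).codRestrict (F.AutF P) (fun g => by
    have h : ∀ x ∈ P, (↑g : S) * x * (↑g : S)⁻¹ ∈ P := fun x hx =>
      (mem_normalizer_iff.mp g.2 x).mp hx
    have h2 := F.conj_mem P P ↑g h
    have he : conjMap (↑g : S) P P h = (conjAut P g).toMonoidHom := by
      ext x; rfl
    rw [he] at h2
    exact h2)

/-- For `K ≤ N_S(P)`, the subgroup `Out_K(P) ≤ Out_F(P)` of classes of automorphisms
induced by conjugation by elements of `K`. -/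
noncomputable def outOf (P K : Subgroup S) (h : K ≤ (Subgroup.normalizer (P : Set S))) : Subgroup (F.OutF P) :=
  ((F.outMk P).comp ((F.toAutF P).comp (Subgroup.inclusion h))).range

/-- `Aut_S(P)` as a subgroup of `Aut_F(P)`. -/
def AutSF (P : Subgroup S) : Subgroup (F.AutF P) := (F.toAutF P).range

/-- `P` is fully automized (in `F`, at the prime `p`) if `Aut_S(P)` is a Sylow
`p`-subgroup of `Aut_F(P)`. -/
def FullyAutomized (p : ℕ) [Fact p.Prime] (P : Subgroup S) : Prop :=
  ∃ Syl : Sylow p (F.AutF P), (Syl : Subgroup (F.AutF P)) = F.AutSF P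

/-- `P` is receptive in `F` if every `F`-isomorphism `φ : Q → P` extends to the
subgroup `N_φ = {g ∈ N_S(Q) | φ ∘ c_g ∘ φ⁻¹ ∈ Aut_S(P)}`. -/
def Receptive (P : Subgroup S) : Prop :=
  ∀ (Q : Subgroup S) (φ : Q ≃* P), φ.toMonoidHom ∈ F.Hom Q P →
    ∃ N : Subgroup S,
      (∀ g : S, g ∈ N ↔ ∃ hg : g ∈ (Subgroup.normalizer (Q : Set S)), ∃ h ∈ (Subgroup.normalizer (P : Set S)), ∀ q : Q,
        (↑(φ ⟨g * ↑q * g⁻¹, (mem_normalizer_iff.mp hg ↑q).mp q.2⟩) : S)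
          = h * ↑(φ q) * h⁻¹) ∧
      ∃ ψ ∈ F.Hom N ⊤, ∀ (q : S) (hq : q ∈ Q) (hq' : q ∈ N),
        (↑(ψ ⟨q, hq'⟩) : S) = ↑(φ ⟨q, hq⟩)

/-- A fusion system is saturated if every `F`-conjugacy class of subgroups contains a
subgroup that is fully automized and receptive. -/
def Saturated (p : ℕ) [Fact p.Prime] : Prop :=
  ∀ P : Subgroup S, ∃ P' : Subgroup S, F.FConj P P' ∧
    F.FullyAutomized p P' ∧ F.Receptive P'

end FusionSystem

end Core

section SQV

open DirectSum

variable {S : Type*} [Group S]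

namespace FusionSystem

variable (F : FusionSystem S)

/-- Conjugation of `F`-automorphism groups by an `F`-isomorphism `e : Q ≃* L`:
`γ ↦ e⁻¹ ∘ γ ∘ e`. -/
def autConj {Q L : Subgroup S} (e : Q ≃* L) (he : e.toMonoidHom ∈ F.Hom Q L) :
    F.AutF L →* F.AutF Q where
  toFun γ := ⟨(e.trans γ.1).trans e.symm, by
    have h1 : ((e.trans γ.1).trans e.symm).toMonoidHom
        = (e.symm.toMonoidHom.comp γ.1.toMonoidHom).comp e.toMonoidHom := by
      ext x; rfl
    show ((e.trans γ.1).trans e.symm).toMonoidHom ∈ F.Hom Q Q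
    rw [h1]
    exact F.comp_mem _ _ he (F.comp_mem _ _ γ.2 (F.inv_mem e he))⟩
  map_one' := by
    ext x
    simp
  map_mul' a b := by
    ext x
    simp [MulAut.mul_apply]

/-- The induced homomorphism `Out_F(L) → Out_F(Q)` given by `[γ] ↦ [e⁻¹ ∘ γ ∘ e]`. -/
def outConj {Q L : Subgroup S} (e : Q ≃* L) (he : e.toMonoidHom ∈ F.Hom Q L) :
    F.OutF L →* F.OutF Q :=
  QuotientGroup.map _ _ (F.autConj e he) (by
    intro γ hγ
    have hγ' : (γ : MulAut ↥L) ∈ innAut ↥L := hγ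
    obtain ⟨x, hx⟩ := hγ'
    show (F.autConj e he) γ ∈ F.innFOf Q
    refine ⟨e.symm x, ?_⟩
    have hx' : ∀ z : L, (γ : MulAut L) z = x * z * x⁻¹ := by
      intro z
      rw [← hx]
      rfl
    ext y
    simp only [MulAut.conj_apply]
    have h2 : ((F.AutF Q).subtype ((F.autConj e he) γ)) y = e.symm ((γ : MulAut L) (e y)) := rfl
    rw [h2, hx' (e y)]
    push_cast [map_mul, map_inv, MulEquiv.symm_apply_apply]
    ring_nf)

end FusionSystem

/-- The relative trace of an action with respect to a subgroup `K ≤ G`, given by summing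
the action of a set of representatives of the left cosets of `K` in `G`. -/
noncomputable def cosetTrace {p : ℕ} {V : Type*} [AddCommGroup V] [Module (ZMod p) V]
    {G : Type*} [Group G] [Finite G] (K : Subgroup G) (σ : G →* (V →ₗ[ZMod p] V)) :
    V →ₗ[ZMod p] V :=
  haveI : Finite (G ⧸ K) := Quotient.finite _
  haveI := Fintype.ofFinite (G ⧸ K)
  ∑ x : G ⧸ K, σ (Quotient.out x)

namespace FusionSystem

variable (F : FusionSystem S)

/-- A choice of an `F`-isomorphism `Q ≃* L` for `F`-conjugate subgroups. -/
noncomputable def chosenIso {Q L : Subgroup S} (hc : F.FConj Q L) : Q ≃* L := hc.choose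

lemma chosenIso_mem {Q L : Subgroup S} (hc : F.FConj Q L) :
    (F.chosenIso hc).toMonoidHom ∈ F.Hom Q L := hc.choose_spec

end FusionSystem

/-- The conjugate `ˣL` of a subgroup. -/
def conjSub (x : S) (L : Subgroup S) : Subgroup S :=
  Subgroup.map (MulAut.conj x).toMonoidHom L

lemma conjSub_one (L : Subgroup S) : conjSub 1 L = L := by
  ext z
  simp [conjSub, Subgroup.mem_map, MulAut.conj_apply]

lemma conjSub_mul (x y : S) (L : Subgroup S) :
    conjSub (x * y) L = conjSub x (conjSub y L) := by
  ext z
  simp only [conjSub, Subgroup.mem_map, MulEquiv.coe_toMonoidHom, MulAut.conj_apply]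
  constructor
  · rintro ⟨a, ha, rfl⟩
    exact ⟨y * a * y⁻¹, ⟨a, ha, rfl⟩, by group⟩
  · rintro ⟨b, ⟨a, ha, rfl⟩, rfl⟩
    exact ⟨a, ha, by group⟩

/-- Conjugation as an isomorphism `L ≃* ˣL = L'`. -/
def conjEquiv (r : S) (L L' : Subgroup S) (h : conjSub r L = L') : L ≃* L' :=
  (MulEquiv.subgroupMap (MulAut.conj r) L).trans (MulEquiv.subgroupCongr h)

lemma conjEquiv_mem (F : FusionSystem S) (r : S) (L L' : Subgroup S) (h : conjSub r L = L') :
    (conjEquiv r L L' h).toMonoidHom ∈ F.Hom L L' := by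
  have hmem : ∀ x ∈ L, r * x * r⁻¹ ∈ L' := by
    intro x hx
    rw [← h]
    exact ⟨x, hx, rfl⟩
  have he : conjMap r L L' hmem = (conjEquiv r L L' h).toMonoidHom := by
    ext x; rfl
  rw [← he]
  exact F.conj_mem L L' r hmem

namespace FusionSystem

variable (F : FusionSystem S) {Q₀ : Subgroup S}
variable {p : ℕ} {V : Type*} [AddCommGroup V] [Module (ZMod p) V]

/-- The action of `N_P(L)` on `V` twisted by an `F`-isomorphism `α : Q₀ ≃* L`, i.e. the
action of `N_P(L)` on `^αV` through `N_P(L) → Out_F(L) → Out_F(Q₀)`. -/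
noncomputable def dpActionAt (ρ : Representation (ZMod p) (F.OutF Q₀) V)
    {L : Subgroup S} (α : Q₀ ≃* L) (hα : α.toMonoidHom ∈ F.Hom Q₀ L) (P : Subgroup S) :
    ↥(P ⊓ (Subgroup.normalizer (L : Set S))) →* (V →ₗ[ZMod p] V) :=
  (((ρ : F.OutF Q₀ →* (V →ₗ[ZMod p] V)).comp (F.outConj α hα)).comp (F.outMk L)).comp
    ((F.toAutF L).comp (Subgroup.inclusion inf_le_right))

/-- The action of `N_P(L)` on `^αV` for the chosen isomorphism `α : Q₀ ≃* L`. -/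
noncomputable def dpAction (ρ : Representation (ZMod p) (F.OutF Q₀) V)
    {L : Subgroup S} (hc : F.FConj Q₀ L) (P : Subgroup S) :
    ↥(P ⊓ (Subgroup.normalizer (L : Set S))) →* (V →ₗ[ZMod p] V) :=
  F.dpActionAt ρ (F.chosenIso hc) (F.chosenIso_mem hc) P

variable [Finite S]

/-- The summand `V_{α,L}(P) = tr_L^{N_P(L)}(^αV)` of the Díaz–Park Mackey functor. -/
noncomputable def dpSummand (ρ : Representation (ZMod p) (F.OutF Q₀) V)
    (P : Subgroup S) {L : Subgroup S} (hc : F.FConj Q₀ L) : Submodule (ZMod p) V :=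
  LinearMap.range (cosetTrace (L.subgroupOf (P ⊓ (Subgroup.normalizer (L : Set S)))) (F.dpAction ρ hc P))

/-- The setoid of `P`-conjugacy on the subgroups of `P` that are `F`-conjugate to `Q₀`. -/
def dpRel (Q₀ P : Subgroup S) : Setoid {L : Subgroup S // L ≤ P ∧ F.FConj Q₀ L} where
  r L₁ L₂ := ∃ x ∈ P, conjSub x L₁.1 = L₂.1
  iseqv := by
    constructor
    · intro L
      exact ⟨1, P.one_mem, conjSub_one _⟩
    · rintro L₁ L₂ ⟨x, hx, hconj⟩
      refine ⟨x⁻¹, P.inv_mem hx, ?_⟩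
      rw [← hconj, ← conjSub_mul]
      simp [conjSub_one]
    · rintro L₁ L₂ L₃ ⟨x, hx, hx'⟩ ⟨y, hy, hy'⟩
      exact ⟨y * x, P.mul_mem hy hx, by rw [conjSub_mul, hx', hy']⟩

/-- The index set of the Díaz–Park direct sum decomposition of `S_{Q₀,V}(P)`:
`P`-conjugacy classes of subgroups of `P` that are `F`-conjugate to `Q₀`. -/
def SQVIndex (Q₀ P : Subgroup S) : Type _ := Quotient (F.dpRel Q₀ P)

/-- The chosen representative of a `P`-conjugacy class. -/
noncomputable def dpRep {Q₀ P : Subgroup S} (c : F.SQVIndex Q₀ P) : Subgroup S :=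
  (Quotient.out c).1

lemma dpRep_le {Q₀ P : Subgroup S} (c : F.SQVIndex Q₀ P) : F.dpRep c ≤ P :=
  (Quotient.out c).2.1

lemma dpRep_fconj {Q₀ P : Subgroup S} (c : F.SQVIndex Q₀ P) : F.FConj Q₀ (F.dpRep c) :=
  (Quotient.out c).2.2

/-- The value `S_{Q₀,V}(P)` of the Díaz–Park Mackey functor:
the direct sum of `tr_L^{N_P(L)}(^αV)` over the `P`-conjugacy classes of subgroups `L ≤ P`
`F`-conjugate to `Q₀` (with chosen representatives and chosen isomorphisms). -/
noncomputable abbrev SQVModule (ρ : Representation (ZMod p) (F.OutF Q₀) V) (P : Subgroup S) :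
    Type _ :=
  ⨁ (c : F.SQVIndex Q₀ P), ↥(F.dpSummand ρ P (F.dpRep_fconj c))

/-- The inclusion of the summand indexed by the class `c` into `S_{Q₀,V}(P)`. -/
noncomputable def dpOf (ρ : Representation (ZMod p) (F.OutF Q₀) V) (P : Subgroup S)
    (c : F.SQVIndex Q₀ P) :
    ↥(F.dpSummand ρ P (F.dpRep_fconj c)) →ₗ[ZMod p] F.SQVModule ρ P :=
  letI := Classical.decEq (F.SQVIndex Q₀ P)
  DirectSum.lof (ZMod p) (F.SQVIndex Q₀ P) (fun c => ↥(F.dpSummand ρ P (F.dpRep_fconj c))) c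

/-- The component of an element of `S_{Q₀,V}(P)` at the class `c`, as an element of `V`. -/
noncomputable def dpComp {ρ : Representation (ZMod p) (F.OutF Q₀) V} {P : Subgroup S}
    (x : F.SQVModule ρ P) (c : F.SQVIndex Q₀ P) : V :=
  ((x : ⨁ (c : F.SQVIndex Q₀ P), ↥(F.dpSummand ρ P (F.dpRep_fconj c))) c : V)

/-- The element `[α_{L'}⁻¹ ∘ c_r ∘ α_L] ∈ Aut_F(Q₀)` transporting between the twisted
modules `^{c_r ∘ α_L}V` and `^{α_{L'}}V`. -/
noncomputable def transport {Q₀ L L' : Subgroup S} (hc : F.FConj Q₀ L) (hc' : F.FConj Q₀ L')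
    (r : S) (h : conjSub r L = L') : F.AutF Q₀ :=
  ⟨((F.chosenIso hc).trans (conjEquiv r L L' h)).trans (F.chosenIso hc').symm, by
    show (((F.chosenIso hc).trans (conjEquiv r L L' h)).trans (F.chosenIso hc').symm).toMonoidHom
      ∈ F.Hom Q₀ Q₀
    have h1 : (((F.chosenIso hc).trans (conjEquiv r L L' h)).trans
        (F.chosenIso hc').symm).toMonoidHom
        = ((F.chosenIso hc').symm.toMonoidHom.comp (conjEquiv r L L' h).toMonoidHom).comp
          (F.chosenIso hc).toMonoidHom := by
      ext x; rfl
    rw [h1]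
    exact F.comp_mem _ _ (F.chosenIso_mem hc)
      (F.comp_mem _ _ (conjEquiv_mem F r L L' h) (F.inv_mem _ (F.chosenIso_mem hc')))⟩

/-- The image of `transport` in `Out_F(Q₀)`. -/
noncomputable def outTransport {Q₀ L L' : Subgroup S} (hc : F.FConj Q₀ L)
    (hc' : F.FConj Q₀ L') (r : S) (h : conjSub r L = L') : F.OutF Q₀ :=
  F.outMk Q₀ (F.transport hc hc' r h)

/-- The relative trace `tr_{N_T(L)}^{N_R(L)}` on `^αV`, for `T ≤ R`. -/
noncomputable def dpIndTrace (ρ : Representation (ZMod p) (F.OutF Q₀) V)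
    {L : Subgroup S} (hc : F.FConj Q₀ L) (T R : Subgroup S) (hTR : T ≤ R) :
    V →ₗ[ZMod p] V :=
  cosetTrace ((T ⊓ (Subgroup.normalizer (L : Set S))).subgroupOf (R ⊓ (Subgroup.normalizer (L : Set S)))) (F.dpAction ρ hc R)

/-- The restriction and induction maps of the Díaz–Park Mackey functor `S_{Q₀,V}`,
characterized on each direct summand by the formulas of Díaz–Park:
restriction along `T ≤ P` maps the summand of the class of `L` diagonally (via the
identifications `^{c_r∘α_L}V ≅ ^{α_{L'}}V`) into the summands of the `T`-classes of the
`P`-conjugates `L'` of `L` contained in `T`, and is zero on all other components;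
induction along `T ≤ R` maps the summand of the class of `L` into the summand of the
`R`-class of `L` by the relative trace `tr_{N_T(L)}^{N_R(L)}`. -/
structure SQVMaps (ρ : Representation (ZMod p) (F.OutF Q₀) V) where
  res : ∀ {T P : Subgroup S}, T ≤ P → (F.SQVModule ρ P →ₗ[ZMod p] F.SQVModule ρ T)
  ind : ∀ {T R : Subgroup S}, T ≤ R → (F.SQVModule ρ T →ₗ[ZMod p] F.SQVModule ρ R)
  res_spec : ∀ {T P : Subgroup S} (hTP : T ≤ P) (c : F.SQVIndex Q₀ P)
    (v : ↥(F.dpSummand ρ P (F.dpRep_fconj c))) (c' : F.SQVIndex Q₀ T)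
    (r : S), r ∈ P → (h : conjSub r (F.dpRep c) = F.dpRep c') →
      F.dpComp (res hTP (F.dpOf ρ P c v)) c'
        = ρ (F.outTransport (F.dpRep_fconj c) (F.dpRep_fconj c') r h) (v : V)
  res_spec₂ : ∀ {T P : Subgroup S} (hTP : T ≤ P) (c : F.SQVIndex Q₀ P)
    (v : ↥(F.dpSummand ρ P (F.dpRep_fconj c))) (c' : F.SQVIndex Q₀ T),
      (¬ ∃ r ∈ P, conjSub r (F.dpRep c) = F.dpRep c') →
      F.dpComp (res hTP (F.dpOf ρ P c v)) c' = 0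
  ind_spec : ∀ {T R : Subgroup S} (hTR : T ≤ R) (c : F.SQVIndex Q₀ T)
    (v : ↥(F.dpSummand ρ T (F.dpRep_fconj c))) (c' : F.SQVIndex Q₀ R)
    (r : S), r ∈ R → (h : conjSub r (F.dpRep c) = F.dpRep c') →
      F.dpComp (ind hTR (F.dpOf ρ T c v)) c'
        = ρ (F.outTransport (F.dpRep_fconj c) (F.dpRep_fconj c') r h)
            (F.dpIndTrace ρ (F.dpRep_fconj c) T R hTR (v : V))
  ind_spec₂ : ∀ {T R : Subgroup S} (hTR : T ≤ R) (c : F.SQVIndex Q₀ T)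
    (v : ↥(F.dpSummand ρ T (F.dpRep_fconj c))) (c' : F.SQVIndex Q₀ R),
      (¬ ∃ r ∈ R, conjSub r (F.dpRep c) = F.dpRep c') →
      F.dpComp (ind hTR (F.dpOf ρ T c v)) c' = 0

/-- A representation is simple (irreducible) if the module is nonzero and has no proper
nonzero invariant submodules. -/
def IsSimpleRep (ρ : Representation (ZMod p) (F.OutF Q₀) V) : Prop :=
  Nontrivial V ∧ ∀ W : Submodule (ZMod p) V,
    (∀ (g : F.OutF Q₀), ∀ v ∈ W, ρ g v ∈ W) → W = ⊥ ∨ W = ⊤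

end FusionSystem

end SQV


/-!
Every vanishing below is that of a relative trace `tr_K^H` on an `𝔽_p`-module for a `p`-group
`H`: it is zero as soon as `H` acts trivially on a subgroup strictly containing `K`, and it
kills every `H`-fixed vector when `K < H`, since it multiplies it by `[H : K] ≡ 0`.

(i) Let `u ∈ C_U(T) \ T`. For `U = P`, a summand of `S_{Q,V}(P)` with nonzero restriction
to `T` sits at some `L ≤ T` (as `P` normalizes `T`); `u` centralizes `L`, so `⟨L, u⟩` acts
trivially on `^αV` and the summand is zero, whence `Res_T^P = 0`. For `U = R`, both `T` (abelian) and `u`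
centralize every `L ≤ T`, so every trace `tr_{N_T(L)}^{N_R(L)}` vanishes and `Ind_T^R = 0`.

(ii) As `T` is abelian, the summands of `S_{Q,V}(T)` at proper subgroups `L < T` vanish. The
component at `T` of a restriction from `P` is `N_P(T)`-invariant, hence `R`-invariant when
`Out_P(T) = Out_R(T)`, and the trace from `T` to `R` kills it. In both cases `Ind ∘ Res = 0`.
-/

lemma IsPGroup.prime_dvd_index {p : ℕ} [Fact p.Prime] {G : Type*} [Group G]
    (hG : IsPGroup p G) {H : Subgroup G} [H.FiniteIndex] (hH : H ≠ ⊤) : p ∣ H.index := by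
  obtain ⟨n, hn⟩ := hG.index H
  rcases n with _ | n
  · exact absurd (Subgroup.index_eq_one.mp (by simpa using hn)) hH
  · exact hn ▸ dvd_pow_self p n.succ_ne_zero

lemma nsmul_eq_zero_of_dvd {p n : ℕ} {V : Type*} [AddCommGroup V] [Module (ZMod p) V]
    (h : p ∣ n) (w : V) : n • w = 0 := by
  rw [← Nat.cast_smul_eq_nsmul (ZMod p), (ZMod.natCast_eq_zero_iff n p).mpr h, zero_smul]

lemma conjSub_eq_of_mem_normalizer {S : Type*} [Group S] {g : S} {T : Subgroup S}
    (h : g ∈ normalizer (T : Set S)) : conjSub g T = T :=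
  mem_normalizer_iff_map_conj_eq.mp h

section CosetTrace

variable {p : ℕ} [Fact p.Prime] {V : Type*} [AddCommGroup V] [Module (ZMod p) V]
  {G : Type*} [Group G] [Finite G]

lemma cosetTrace_eq_sum (K : Subgroup G) (σ : G →* (V →ₗ[ZMod p] V)) [Fintype (G ⧸ K)] :
    cosetTrace K σ = ∑ x : G ⧸ K, σ x.out := by
  unfold cosetTrace
  congr!

lemma cosetTrace_eq_zero_of_lt_ker (hG : IsPGroup p G) {K : Subgroup G}
    {σ : G →* (V →ₗ[ZMod p] V)} (hK : K < σ.ker) : cosetTrace K σ = 0 := by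
  have := Fintype.ofFinite (G ⧸ K)
  have := Fintype.ofFinite (G ⧸ σ.ker)
  have := Fintype.ofFinite (σ.ker ⧸ K.subgroupOf σ.ker)
  have hfactor : ∀ x : G ⧸ K,
      σ x.out = σ (Subgroup.quotientEquivProdOfLE hK.le x).1.out := by
    intro x
    have hx : ((x.out : G) : G ⧸ σ.ker) = (Subgroup.quotientEquivProdOfLE hK.le x).1 := by
      conv_rhs => rw [← QuotientGroup.out_eq' x]
      rfl
    rw [← QuotientGroup.out_eq' (Subgroup.quotientEquivProdOfLE hK.le x).1] at hx
    exact σ.eq_iff.mpr (QuotientGroup.eq.mp hx.symm)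
  have hindex : p ∣ Fintype.card (σ.ker ⧸ K.subgroupOf σ.ker) := by
    rw [← Nat.card_eq_fintype_card]
    refine (hG.to_subgroup _).prime_dvd_index fun htop => hK.ne ?_
    exact le_antisymm hK.le (Subgroup.subgroupOf_eq_top.mp htop)
  -- each coset of `ker σ` is counted `[ker σ : K]` times
  rw [cosetTrace_eq_sum, Fintype.sum_equiv (Subgroup.quotientEquivProdOfLE hK.le) _
    (fun yz => σ yz.1.out) hfactor, Fintype.sum_prod_type]
  simp only [Finset.sum_const, Finset.card_univ, nsmul_eq_zero_of_dvd hindex, smul_zero]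

lemma cosetTrace_apply_eq_zero_of_fixed (hG : IsPGroup p G) {K : Subgroup G} (hK : K ≠ ⊤)
    (σ : G →* (V →ₗ[ZMod p] V)) {w : V} (hw : ∀ g, σ g w = w) :
    cosetTrace K σ w = 0 := by
  have := Fintype.ofFinite (G ⧸ K)
  rw [cosetTrace_eq_sum, LinearMap.coe_sum, Finset.sum_apply]
  simp only [hw, Finset.sum_const, Finset.card_univ, ← Nat.card_eq_fintype_card]
  exact nsmul_eq_zero_of_dvd (hG.prime_dvd_index hK) w

end CosetTrace

namespace FusionSystem

variable {S : Type*} [Group S] (F : FusionSystem S) {Q₀ : Subgroup S}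
  {p : ℕ} {V : Type*} [AddCommGroup V] [Module (ZMod p) V]
  (ρ : Representation (ZMod p) (F.OutF Q₀) V)

lemma toAutF_eq_one_of_mem_centralizer {L : Subgroup S} (g : normalizer (L : Set S))
    (hg : (g : S) ∈ centralizer (L : Set S)) : F.toAutF L g = 1 := by
  refine Subtype.ext (MulEquiv.ext fun x => Subtype.ext ?_)
  show (g : S) * x * (g : S)⁻¹ = x
  rw [← mem_centralizer_iff.mp hg x x.2, mul_inv_cancel_right]

lemma outMk_toAutF_eq_one_of_mem {L : Subgroup S} (g : normalizer (L : Set S))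
    (hg : (g : S) ∈ L) : F.outMk L (F.toAutF L g) = 1 :=
  (QuotientGroup.eq_one_iff _).mpr ⟨⟨g, hg⟩, rfl⟩

lemma dpAction_eq_one_of_mem {L : Subgroup S} (hc : F.FConj Q₀ L) {U : Subgroup S}
    (g : ↥(U ⊓ normalizer (L : Set S))) (hg : (g : S) ∈ L) : F.dpAction ρ hc U g = 1 := by
  show ρ (F.outConj _ _ (F.outMk L (F.toAutF L ⟨g, g.2.2⟩))) = 1
  rw [F.outMk_toAutF_eq_one_of_mem _ hg, map_one, map_one]

lemma dpAction_eq_one_of_mem_centralizer {L : Subgroup S} (hc : F.FConj Q₀ L)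
    {U : Subgroup S} (g : ↥(U ⊓ normalizer (L : Set S)))
    (hg : (g : S) ∈ centralizer (L : Set S)) : F.dpAction ρ hc U g = 1 := by
  show ρ (F.outConj _ _ (F.outMk L (F.toAutF L ⟨g, g.2.2⟩))) = 1
  rw [F.toAutF_eq_one_of_mem_centralizer _ hg, map_one, map_one, map_one]

lemma dpAction_eq_outTransport {L : Subgroup S} (hc : F.FConj Q₀ L) {U : Subgroup S}
    (g : ↥(U ⊓ normalizer (L : Set S))) :
    F.dpAction ρ hc U g =
      ρ (F.outTransport hc hc g (conjSub_eq_of_mem_normalizer g.2.2)) :=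
  rfl

lemma outTransport_mul {L L' : Subgroup S} (hc : F.FConj Q₀ L) (hc' : F.FConj Q₀ L')
    {g r : S} (hg : conjSub g L' = L') (hr : conjSub r L = L')
    (hgr : conjSub (g * r) L = L') :
    F.outTransport hc hc' (g * r) hgr
      = F.outTransport hc' hc' g hg * F.outTransport hc hc' r hr := by
  rw [outTransport, outTransport, outTransport, ← map_mul]
  congr 1
  refine Subtype.ext (MulEquiv.ext fun x => ?_)
  have hconj : conjEquiv (g * r) L L' hgr (F.chosenIso hc x)
      = conjEquiv g L' L' hg (conjEquiv r L L' hr (F.chosenIso hc x)) :=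
    Subtype.ext (show g * r * _ * (g * r)⁻¹ = g * (r * _ * r⁻¹) * g⁻¹ by group)
  show ((F.chosenIso hc).trans (conjEquiv (g * r) L L' hgr)).trans (F.chosenIso hc').symm x
    = ((F.chosenIso hc').trans (conjEquiv g L' L' hg)).trans (F.chosenIso hc').symm
        (((F.chosenIso hc).trans (conjEquiv r L L' hr)).trans (F.chosenIso hc').symm x)
  simp only [MulEquiv.trans_apply, MulEquiv.apply_symm_apply, hconj]

lemma exists_dpAction_eq_of_outOf_eq {L : Subgroup S} (hc : F.FConj Q₀ L) {P R : Subgroup S}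
    (heq : F.outOf L (P ⊓ normalizer (L : Set S)) inf_le_right
      = F.outOf L (R ⊓ normalizer (L : Set S)) inf_le_right)
    (g : ↥(R ⊓ normalizer (L : Set S))) :
    ∃ x : ↥(P ⊓ normalizer (L : Set S)), F.dpAction ρ hc R g = F.dpAction ρ hc P x := by
  obtain ⟨x, hx⟩ : F.outMk L (F.toAutF L (inclusion inf_le_right g))
      ∈ F.outOf L (P ⊓ normalizer (L : Set S)) inf_le_right := heq ▸ ⟨g, rfl⟩
  exact ⟨x, congrArg (fun o => ρ (F.outConj _ _ o)) hx.symm⟩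

section Vanishing

variable [Finite S] [Fact p.Prime]

lemma dpSummand_eq_bot_of_mem_centralizer (hS : IsPGroup p S) {U L : Subgroup S}
    (hc : F.FConj Q₀ L) {u : S} (huU : u ∈ U) (hu : u ∈ centralizer (L : Set S))
    (huL : u ∉ L) : F.dpSummand ρ U hc = ⊥ := by
  rw [dpSummand, cosetTrace_eq_zero_of_lt_ker (hS.to_subgroup _), LinearMap.range_zero]
  refine SetLike.lt_iff_le_and_exists.mpr ⟨fun g hg => F.dpAction_eq_one_of_mem ρ hc g hg, ?_⟩
  let g : ↥(U ⊓ normalizer (L : Set S)) := ⟨u, huU, centralizer_le_normalizer _ hu⟩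
  exact ⟨g, F.dpAction_eq_one_of_mem_centralizer ρ hc g hu, huL⟩

lemma dpIndTrace_eq_zero_of_mem_centralizer (hS : IsPGroup p S) {T R L : Subgroup S}
    (hc : F.FConj Q₀ L) (hTR : T ≤ R) (hT : T ≤ centralizer (L : Set S)) {u : S}
    (huR : u ∈ R) (hu : u ∈ centralizer (L : Set S)) (huT : u ∉ T) :
    F.dpIndTrace ρ hc T R hTR = 0 := by
  refine cosetTrace_eq_zero_of_lt_ker (hS.to_subgroup _) (SetLike.lt_iff_le_and_exists.mpr
    ⟨fun g hg => F.dpAction_eq_one_of_mem_centralizer ρ hc g (hT hg.1), ?_⟩)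
  let g : ↥(R ⊓ normalizer (L : Set S)) := ⟨u, huR, centralizer_le_normalizer _ hu⟩
  exact ⟨g, F.dpAction_eq_one_of_mem_centralizer ρ hc g hu, fun hg => huT hg.1⟩

lemma dpIndTrace_apply_eq_zero_of_fixed (hS : IsPGroup p S) {T R L : Subgroup S}
    (hc : F.FConj Q₀ L) (hTR : T ≤ R) {u : S} (huR : u ∈ R)
    (huN : u ∈ normalizer (L : Set S)) (huT : u ∉ T) {w : V} (hw : ∀ g, F.dpAction ρ hc R g w = w) :
    F.dpIndTrace ρ hc T R hTR w = 0 := by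
  refine cosetTrace_apply_eq_zero_of_fixed (hS.to_subgroup _) (fun htop => huT ?_) _ hw
  exact (Subgroup.subgroupOf_eq_top.mp htop ⟨huR, huN⟩).1

end Vanishing

variable [Finite S] {F ρ}

lemma eq_zero_of_dpComp_eq_zero {P : Subgroup S} {x : F.SQVModule ρ P}
    (h : ∀ c, F.dpComp x c = 0) : x = 0 :=
  DirectSum.ext fun c => Subtype.ext (h c)

lemma map_eq_zero_of_map_dpOf {P : Subgroup S} {N : Type*} [AddCommGroup N]
    [Module (ZMod p) N] (f : F.SQVModule ρ P →ₗ[ZMod p] N) (x : F.SQVModule ρ P)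
    (h : ∀ c, f (F.dpOf ρ P c (x c)) = 0) : f x = 0 := by
  classical
  rw [← DirectSum.sum_support_of x, map_sum]
  exact Finset.sum_eq_zero fun c _ => h c

namespace SQVMaps

variable (M : F.SQVMaps ρ)

lemma res_dpOf_eq_zero {T P : Subgroup S} (hTP : T ≤ P) (c : F.SQVIndex Q₀ P)
    (v : ↥(F.dpSummand ρ P (F.dpRep_fconj c)))
    (hv : ∀ (c' : F.SQVIndex Q₀ T), ∀ r ∈ P,
      conjSub r (F.dpRep c) = F.dpRep c' → (v : V) = 0) :
    M.res hTP (F.dpOf ρ P c v) = 0 := by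
  refine eq_zero_of_dpComp_eq_zero fun c' => ?_
  by_cases h : ∃ r ∈ P, conjSub r (F.dpRep c) = F.dpRep c'
  · obtain ⟨r, hr, hrc⟩ := h
    rw [M.res_spec hTP c v c' r hr hrc, hv c' r hr hrc, map_zero]
  · exact M.res_spec₂ hTP c v c' h

lemma ind_dpOf_eq_zero {T R : Subgroup S} (hTR : T ≤ R) (c : F.SQVIndex Q₀ T)
    (v : ↥(F.dpSummand ρ T (F.dpRep_fconj c)))
    (hv : F.dpIndTrace ρ (F.dpRep_fconj c) T R hTR v = 0) :
    M.ind hTR (F.dpOf ρ T c v) = 0 := by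
  refine eq_zero_of_dpComp_eq_zero fun c' => ?_
  by_cases h : ∃ r ∈ R, conjSub r (F.dpRep c) = F.dpRep c'
  · obtain ⟨r, hr, hrc⟩ := h
    rw [M.ind_spec hTR c v c' r hr hrc, hv, map_zero]
  · exact M.ind_spec₂ hTR c v c' h

/-- Conjugating by `g` only replaces the element `r` of `res_spec` by `g * r`. -/
lemma dpAction_dpComp_res {T P : Subgroup S} (hTP : T ≤ P) (c : F.SQVIndex Q₀ P)
    (v : ↥(F.dpSummand ρ P (F.dpRep_fconj c))) (c' : F.SQVIndex Q₀ T)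
    (g : ↥(P ⊓ normalizer (F.dpRep c' : Set S))) :
    F.dpAction ρ (F.dpRep_fconj c') P g (F.dpComp (M.res hTP (F.dpOf ρ P c v)) c')
      = F.dpComp (M.res hTP (F.dpOf ρ P c v)) c' := by
  rw [F.dpAction_eq_outTransport]
  by_cases h : ∃ r ∈ P, conjSub r (F.dpRep c) = F.dpRep c'
  · obtain ⟨r, hr, hrc⟩ := h
    have hg := conjSub_eq_of_mem_normalizer g.2.2
    have hgr : conjSub (g * r) (F.dpRep c) = F.dpRep c' := by rw [conjSub_mul, hrc, hg]
    have e1 := M.res_spec hTP c v c' r hr hrc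
    have e2 := M.res_spec hTP c v c' (g * r) (P.mul_mem g.2.1 hr) hgr
    rw [e1, ← Module.End.mul_apply, ← map_mul, ← F.outTransport_mul _ _ hg hrc hgr]
    exact e2.symm.trans e1
  · rw [M.res_spec₂ hTP c v c' h, map_zero]

variable [Fact p.Prime] (hS : IsPGroup p S)
include hS

lemma res_eq_zero_of_mem_centralizer {T P : Subgroup S} (hTP : T ≤ P)
    (hPN : P ≤ normalizer (T : Set S)) {u : S} (huP : u ∈ P)
    (hu : u ∈ centralizer (T : Set S)) (huT : u ∉ T) : M.res hTP = 0 := by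
  refine LinearMap.ext fun x =>
    map_eq_zero_of_map_dpOf _ x fun c => M.res_dpOf_eq_zero hTP c _ fun c' r hr hrc => ?_
  have hLT : F.dpRep c ≤ T := fun y hy =>
    (mem_normalizer_iff.mp (hPN hr) y).mpr (F.dpRep_le c' (hrc ▸ ⟨y, hy, rfl⟩))
  have hbot := F.dpSummand_eq_bot_of_mem_centralizer ρ hS (F.dpRep_fconj c) huP
    (centralizer_le hLT hu) (fun h => huT (hLT h))
  exact (Submodule.mem_bot _).mp (hbot.le (x c).2)

lemma ind_eq_zero_of_mem_centralizer {T R : Subgroup S} (hTR : T ≤ R)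
    (hT : T ≤ centralizer (T : Set S)) {u : S} (huR : u ∈ R)
    (hu : u ∈ centralizer (T : Set S)) (huT : u ∉ T) : M.ind hTR = 0 := by
  refine LinearMap.ext fun x => map_eq_zero_of_map_dpOf _ x fun c => M.ind_dpOf_eq_zero hTR c _ ?_
  have hLT := F.dpRep_le c
  rw [F.dpIndTrace_eq_zero_of_mem_centralizer ρ hS _ hTR (hT.trans (centralizer_le hLT)) huR
    (centralizer_le hLT hu) huT, LinearMap.zero_apply]

lemma ind_comp_res_eq_zero_of_outOf_eq {P R : Subgroup S}
    (hT : P ⊓ R ≤ centralizer ((P ⊓ R : Subgroup S) : Set S))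
    (hRN : R ≤ normalizer ((P ⊓ R : Subgroup S) : Set S)) (hTR : P ⊓ R ≠ R)
    (heq : F.outOf (P ⊓ R) (P ⊓ normalizer ((P ⊓ R : Subgroup S) : Set S)) inf_le_right
      = F.outOf (P ⊓ R) (R ⊓ normalizer ((P ⊓ R : Subgroup S) : Set S)) inf_le_right) :
    (M.ind (inf_le_right : P ⊓ R ≤ R)).comp (M.res (inf_le_left : P ⊓ R ≤ P)) = 0 := by
  obtain ⟨u, huR, huT⟩ := SetLike.exists_of_lt (inf_le_right.lt_of_ne hTR)
  refine LinearMap.ext fun x => map_eq_zero_of_map_dpOf _ x fun c => ?_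
  set z := M.res inf_le_left (F.dpOf ρ P c (x c))
  refine map_eq_zero_of_map_dpOf (M.ind inf_le_right) z fun c' => M.ind_dpOf_eq_zero _ c' _ ?_
  by_cases hc' : F.dpRep c' = P ⊓ R
  · rw [← hc'] at heq hRN
    refine F.dpIndTrace_apply_eq_zero_of_fixed ρ hS _ _ huR (hRN huR) huT fun g => ?_
    obtain ⟨y, hy⟩ := F.exists_dpAction_eq_of_outOf_eq ρ _ heq g
    rw [hy]
    exact M.dpAction_dpComp_res inf_le_left c (x c) c' y
  · obtain ⟨t, htT, htL⟩ := SetLike.exists_of_lt ((F.dpRep_le c').lt_of_ne hc')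
    have hbot := F.dpSummand_eq_bot_of_mem_centralizer ρ hS (F.dpRep_fconj c') htT
      (centralizer_le (F.dpRep_le c') (hT htT)) htL
    rw [(Submodule.mem_bot _).mp (hbot.le (z c').2), map_zero]

end SQVMaps

end FusionSystem

theorem contra_T_abelian_normal_general
    (p : ℕ) [Fact p.Prime] {S : Type*} [Group S] [Finite S]
    (hS : IsPGroup p S) (F : FusionSystem S)
    (Q₀ : Subgroup S)
    (V : Type*) [AddCommGroup V] [Module (ZMod p) V]
    (ρ : Representation (ZMod p) (F.OutF Q₀) V)
    (M : F.SQVMaps ρ) (P R : Subgroup S) (hR : F.Centric R)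
    (hT : ¬ F.Centric (P ⊓ R))
    (hcomp : (M.ind (inf_le_right : P ⊓ R ≤ R)).comp
      (M.res (inf_le_left : P ⊓ R ≤ P)) ≠ 0)
    (habT : IsMulCommutative (P ⊓ R : Subgroup S)) :
    (∀ U : Subgroup S, (U = P ∨ U = R) → ((P ⊓ R).subgroupOf U).Normal →
      P ⊓ R = U ⊓ Subgroup.centralizer ((P ⊓ R : Subgroup S) : Set S)) ∧
    (((P ⊓ R).subgroupOf P).Normal → ((P ⊓ R).subgroupOf R).Normal →
      F.outOf (P ⊓ R) (P ⊓ Subgroup.normalizer ((P ⊓ R : Subgroup S) : Set S)) inf_le_right ≠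
        F.outOf (P ⊓ R) (R ⊓ Subgroup.normalizer ((P ⊓ R : Subgroup S) : Set S)) inf_le_right) := by
  have hTT := le_centralizer_iff_isMulCommutative.mpr habT
  refine ⟨fun U hU hN => le_antisymm ?_ fun u hu => by_contra fun huT => ?_,
    fun _ hNR heq => hcomp ?_⟩
  · exact le_inf (hU.elim (· ▸ inf_le_left) (· ▸ inf_le_right)) hTT
  · rcases hU with rfl | rfl
    · refine hcomp ?_
      rw [M.res_eq_zero_of_mem_centralizer hS inf_le_left
        (le_normalizer_of_normal_subgroupOf inf_le_left) hu.1 hu.2 huT, LinearMap.comp_zero]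
    · refine hcomp ?_
      rw [M.ind_eq_zero_of_mem_centralizer hS inf_le_right hTT hu.1 hu.2 huT,
        LinearMap.zero_comp]
  · exact M.ind_comp_res_eq_zero_of_outOf_eq hS hTT
      (le_normalizer_of_normal_subgroupOf inf_le_right) (fun h => hT (by rwa [h])) heq

/-- Lemma 3.7: under Hypothesis (Contra), if `T = P ∩ R` is abelian then:
(i) if `T` is normal in `U ∈ {P,R}` then `T = C_U(T)`; (ii) if `T` is normal in both
`P` and `R` then `Out_P(T) ≠ Out_R(T)` as subgroups of `Out_F(T)`. -/
theorem contra_T_abelian_normal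
    (p : ℕ) [Fact p.Prime] (hodd : Odd p) {S : Type*} [Group S] [Finite S]
    (hS : IsPGroup p S) (F : FusionSystem S) (hF : F.Saturated p)
    (Q₀ : Subgroup S) (hQ : ¬ F.Centric Q₀)
    (V : Type*) [AddCommGroup V] [Module (ZMod p) V]
    (ρ : Representation (ZMod p) (F.OutF Q₀) V) (hρ : F.IsSimpleRep ρ)
    (M : F.SQVMaps ρ) (P R : Subgroup S) (hP : F.Centric P) (hR : F.Centric R)
    (hT : ¬ F.Centric (P ⊓ R))
    (hcomp : (M.ind (inf_le_right : P ⊓ R ≤ R)).comp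
      (M.res (inf_le_left : P ⊓ R ≤ P)) ≠ 0)
    (habT : IsMulCommutative (P ⊓ R : Subgroup S)) :
    (∀ U : Subgroup S, (U = P ∨ U = R) → ((P ⊓ R).subgroupOf U).Normal →
      P ⊓ R = U ⊓ Subgroup.centralizer ((P ⊓ R : Subgroup S) : Set S)) ∧
    (((P ⊓ R).subgroupOf P).Normal → ((P ⊓ R).subgroupOf R).Normal →
      F.outOf (P ⊓ R) (P ⊓ Subgroup.normalizer ((P ⊓ R : Subgroup S) : Set S)) inf_le_right ≠
        F.outOf (P ⊓ R) (R ⊓ Subgroup.normalizer ((P ⊓ R : Subgroup S) : Set S)) inf_le_right) :=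
  contra_T_abelian_normal_general p hS F Q₀ V ρ M P R hR hT hcomp habT
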